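/- Let a > 0 and let h_t solve the reverse Loewner equation ∂_t h_t(z) = a/(U_t − h_t(z)), h_0(z) = z, with continuous driving function U and z in the upper half-plane. Define Ψ_t = |h_t'(z)|/Y_t where Y_t = Im(h_t(z)). Then ∂_t (Ψ_t^k) = −2ak Ψ_t^k Y_t²/(X_t² + Y_t²)² for any k, so Ψ_t is nonincreasing; consequently |h_t'(z)| ≤ Y_t/Im(z) ≤ sqrt(2a t/Im(z)² + 1). -/

import Mathlib

open Set

/-!
Write `X + iY = h - U` and `D = X² + Y²`. The Loewner equation gives `∂ₜ(Y²) = 2aY²/D ∈ [0, 2a]`,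
so `Y² - 2at` decreases while `Y²` increases: `Im(z)² ≤ Y²` and `Y² ≤ Im(z)² + 2at`. For `h'` one
finds `∂ₜ‖h'‖² = 2a(X² - Y²)/D² ‖h'‖²`, hence `∂ₜ(Ψ²) = -4aY²/D² Ψ²`. The rate `4aY²/D²` is at
most `4a/Im(z)²`, so a Grönwall bound keeps `Ψ²` positive; then `Ψ = √(Ψ²)` is differentiable with
`∂ₜΨ = -2aY²/D² Ψ ≤ 0`, and `Ψ t ≤ Ψ 0 = 1/Im(z)` is the bound on `‖h'‖`.
-/

theorem monotoneOn_Ici_of_hasDerivWithinAt_nonneg {f f' : ℝ → ℝ} {c : ℝ}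
    (hf : ∀ t ∈ Ici c, HasDerivWithinAt f (f' t) (Ici c) t) (hf' : ∀ t ∈ Ioi c, 0 ≤ f' t) :
    MonotoneOn f (Ici c) := by
  refine monotoneOn_of_hasDerivWithinAt_nonneg (convex_Ici c)
    (fun t ht => (hf t ht).continuousWithinAt) (fun t ht => ?_) (by simpa using hf')
  rw [interior_Ici] at ht ⊢
  exact (hf t (Ioi_subset_Ici_self ht)).mono Ioi_subset_Ici_self

theorem antitoneOn_Ici_of_hasDerivWithinAt_nonpos {f f' : ℝ → ℝ} {c : ℝ}
    (hf : ∀ t ∈ Ici c, HasDerivWithinAt f (f' t) (Ici c) t) (hf' : ∀ t ∈ Ioi c, f' t ≤ 0) :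
    AntitoneOn f (Ici c) := by
  refine antitoneOn_of_hasDerivWithinAt_nonpos (convex_Ici c)
    (fun t ht => (hf t ht).continuousWithinAt) (fun t ht => ?_) (by simpa using hf')
  rw [interior_Ici] at ht ⊢
  exact (hf t (Ioi_subset_Ici_self ht)).mono Ioi_subset_Ici_self

theorem mul_exp_le_of_hasDerivWithinAt_ge {f f' : ℝ → ℝ} {c K : ℝ}
    (hf : ∀ t ∈ Ici c, HasDerivWithinAt f (f' t) (Ici c) t)
    (hf' : ∀ t ∈ Ioi c, -K * f t ≤ f' t) {t : ℝ} (ht : t ∈ Ici c) :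
    f c * Real.exp (-K * (t - c)) ≤ f t := by
  have hmono : MonotoneOn (fun s => f s * Real.exp (K * s)) (Ici c) := by
    refine monotoneOn_Ici_of_hasDerivWithinAt_nonneg
      (fun s hs => (hf s hs).mul ((hasDerivWithinAt_id s _).const_mul K).exp) fun s hs => ?_
    have := hf' s hs
    simp only [id, mul_one]
    nlinarith [Real.exp_pos (K * s)]
  have key := hmono self_mem_Ici ht ht
  have hexp : f c * Real.exp (-K * (t - c)) * Real.exp (K * t) = f c * Real.exp (K * c) := by
    rw [mul_assoc, ← Real.exp_add]; ring_nf
  nlinarith [Real.exp_pos (K * t)]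

/-- `h'` plays the role of the spatial derivative `h_t'(z)`, given through its variational
equation. -/
structure IsReverseLoewnerFlow (a : ℝ) (U : ℝ → ℝ) (h h' : ℝ → ℂ) : Prop where
  hasDerivWithinAt : ∀ t ∈ Ici (0:ℝ), HasDerivWithinAt h (a / ((U t : ℂ) - h t)) (Ici 0) t
  hasDerivWithinAt_deriv : ∀ t ∈ Ici (0:ℝ),
    HasDerivWithinAt h' (a * h' t / (h t - (U t : ℂ)) ^ 2) (Ici 0) t

namespace IsReverseLoewnerFlow

variable {a : ℝ} {U : ℝ → ℝ} {h h' : ℝ → ℂ} {t : ℝ}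

theorem hasDerivWithinAt_im (hL : IsReverseLoewnerFlow a U h h') (ht : t ∈ Ici 0) :
    HasDerivWithinAt (fun s => (h s).im)
      (a * (h t).im / (((h t).re - U t) ^ 2 + (h t).im ^ 2)) (Ici 0) t := by
  refine (Complex.imCLM.hasFDerivAt.comp_hasDerivWithinAt t
    (hL.hasDerivWithinAt t ht)).congr_deriv ?_
  simp only [Complex.imCLM_apply, Complex.div_im, Complex.normSq_apply, Complex.sub_re,
    Complex.sub_im, Complex.ofReal_re, Complex.ofReal_im]
  ring

theorem hasDerivWithinAt_im_sq (hL : IsReverseLoewnerFlow a U h h') (ht : t ∈ Ici 0) :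
    HasDerivWithinAt (fun s => (h s).im ^ 2)
      (2 * a * ((h t).im ^ 2 / (((h t).re - U t) ^ 2 + (h t).im ^ 2))) (Ici 0) t := by
  refine ((hL.hasDerivWithinAt_im ht).pow 2).congr_deriv ?_
  ring

theorem monotoneOn_im_sq (hL : IsReverseLoewnerFlow a U h h') (ha : 0 ≤ a) :
    MonotoneOn (fun s => (h s).im ^ 2) (Ici 0) :=
  monotoneOn_Ici_of_hasDerivWithinAt_nonneg (fun _ ht => hL.hasDerivWithinAt_im_sq ht)
    fun _ _ => by positivity

theorem im_sq_sub_le (hL : IsReverseLoewnerFlow a U h h') (ha : 0 ≤ a) (ht : t ∈ Ici 0) :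
    (h t).im ^ 2 ≤ (h 0).im ^ 2 + 2 * a * t := by
  have hanti : AntitoneOn (fun s => (h s).im ^ 2 - 2 * a * s) (Ici 0) := by
    refine antitoneOn_Ici_of_hasDerivWithinAt_nonpos
      (fun s hs => (hL.hasDerivWithinAt_im_sq hs).sub ((hasDerivWithinAt_id s _).const_mul _))
      fun s _ => ?_
    have hfrac : (h s).im ^ 2 / (((h s).re - U s) ^ 2 + (h s).im ^ 2) ≤ 1 :=
      div_le_one_of_le₀ (le_add_of_nonneg_left (sq_nonneg _)) (by positivity)
    have := mul_le_mul_of_nonneg_left hfrac (by positivity : 0 ≤ 2 * a)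
    simp only [mul_one]
    linarith
  have := hanti self_mem_Ici ht ht
  simp only [mul_zero, sub_zero] at this
  linarith

theorem im_pos (hL : IsReverseLoewnerFlow a U h h') (ha : 0 ≤ a) (h0 : 0 < (h 0).im)
    (ht : t ∈ Ici 0) : 0 < (h t).im := by
  by_contra! hneg
  have hcont : ContinuousOn (fun s => (h s).im) (Icc 0 t) := fun s hs =>
    (hL.hasDerivWithinAt_im hs.1).continuousWithinAt.mono Icc_subset_Ici_self
  obtain ⟨s, hs, hs0⟩ := intermediate_value_Icc' (mem_Ici.mp ht) hcont ⟨hneg, h0.le⟩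
  have := hL.monotoneOn_im_sq ha self_mem_Ici hs.1 hs.1
  simp only [hs0] at this
  nlinarith

theorem hasDerivWithinAt_norm_deriv_sq (hL : IsReverseLoewnerFlow a U h h') (ht : t ∈ Ici 0) :
    HasDerivWithinAt (fun s => ‖h' s‖ ^ 2)
      (2 * a * (((h t).re - U t) ^ 2 - (h t).im ^ 2) /
        (((h t).re - U t) ^ 2 + (h t).im ^ 2) ^ 2 * ‖h' t‖ ^ 2) (Ici 0) t := by
  refine (hL.hasDerivWithinAt_deriv t ht).norm_sq.congr_deriv ?_
  rw [Complex.inner, ← Complex.normSq_eq_norm_sq]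
  simp only [Complex.mul_re, Complex.mul_im, Complex.div_re, Complex.div_im, Complex.conj_re,
    Complex.conj_im, Complex.normSq_apply, Complex.sub_re, Complex.sub_im, Complex.ofReal_re,
    Complex.ofReal_im, pow_two]
  ring

theorem hasDerivWithinAt_sq_norm_deriv_div_im (hL : IsReverseLoewnerFlow a U h h')
    (ht : t ∈ Ici 0) (hY : (h t).im ≠ 0) :
    HasDerivWithinAt (fun s => (‖h' s‖ / (h s).im) ^ 2)
      (-4 * a * (h t).im ^ 2 / (((h t).re - U t) ^ 2 + (h t).im ^ 2) ^ 2 *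
        (‖h' t‖ / (h t).im) ^ 2) (Ici 0) t := by
  have hD : ((h t).re - U t) ^ 2 + (h t).im ^ 2 ≠ 0 := by positivity
  simp only [div_pow]
  refine ((hL.hasDerivWithinAt_norm_deriv_sq ht).div (hL.hasDerivWithinAt_im_sq ht)
    (pow_ne_zero 2 hY)).congr_deriv ?_
  field_simp
  ring

theorem sq_norm_deriv_div_im_pos (hL : IsReverseLoewnerFlow a U h h') (ha : 0 ≤ a)
    (h0 : 0 < (h 0).im) (h'0 : h' 0 ≠ 0) (ht : t ∈ Ici 0) :
    0 < (‖h' t‖ / (h t).im) ^ 2 := by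
  have hpos : 0 < (‖h' 0‖ / (h 0).im) ^ 2 := by positivity
  refine (mul_pos hpos (Real.exp_pos _)).trans_le
    (mul_exp_le_of_hasDerivWithinAt_ge (K := 4 * a / (h 0).im ^ 2)
      (fun s hs => hL.hasDerivWithinAt_sq_norm_deriv_div_im hs (hL.im_pos ha h0 hs).ne')
      (fun s hs => ?_) ht)
  have hY0 := hL.monotoneOn_im_sq ha self_mem_Ici (Ioi_subset_Ici_self hs) (le_of_lt hs)
  have hYs := hL.im_pos ha h0 (Ioi_subset_Ici_self hs)
  have hrate : (h s).im ^ 2 / (((h s).re - U s) ^ 2 + (h s).im ^ 2) ^ 2 ≤ 1 / (h 0).im ^ 2 := by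
    rw [div_le_div_iff₀ (by positivity) (by positivity)]
    nlinarith [sq_nonneg ((h s).re - U s), sq_nonneg (h s).im]
  calc -(4 * a / (h 0).im ^ 2) * (‖h' s‖ / (h s).im) ^ 2
      = -(4 * a * (‖h' s‖ / (h s).im) ^ 2) * (1 / (h 0).im ^ 2) := by ring
    _ ≤ -(4 * a * (‖h' s‖ / (h s).im) ^ 2) *
        ((h s).im ^ 2 / (((h s).re - U s) ^ 2 + (h s).im ^ 2) ^ 2) :=
      mul_le_mul_of_nonpos_left hrate (by simp only [neg_nonpos]; positivity)
    _ = _ := by ring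

theorem hasDerivWithinAt_norm_deriv_div_im (hL : IsReverseLoewnerFlow a U h h') (ha : 0 ≤ a)
    (h0 : 0 < (h 0).im) (h'0 : h' 0 ≠ 0) (ht : t ∈ Ici 0) :
    HasDerivWithinAt (fun s => ‖h' s‖ / (h s).im)
      (-2 * a * (h t).im ^ 2 / (((h t).re - U t) ^ 2 + (h t).im ^ 2) ^ 2 *
        (‖h' t‖ / (h t).im)) (Ici 0) t := by
  have hΨ : ∀ s ∈ Ici (0:ℝ), ‖h' s‖ / (h s).im = √((‖h' s‖ / (h s).im) ^ 2) := fun s hs =>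
    (Real.sqrt_sq (div_nonneg (norm_nonneg _) (hL.im_pos ha h0 hs).le)).symm
  refine (((hL.hasDerivWithinAt_sq_norm_deriv_div_im ht (hL.im_pos ha h0 ht).ne').sqrt
    (hL.sq_norm_deriv_div_im_pos ha h0 h'0 ht).ne').congr_of_mem hΨ ht).congr_deriv ?_
  rw [← hΨ t ht]
  have := (pow_ne_zero_iff two_ne_zero).mp (hL.sq_norm_deriv_div_im_pos ha h0 h'0 ht).ne'
  field_simp
  ring

theorem hasDerivWithinAt_rpow_norm_deriv_div_im (hL : IsReverseLoewnerFlow a U h h')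
    (ha : 0 ≤ a) (h0 : 0 < (h 0).im) (h'0 : h' 0 ≠ 0) (k : ℝ) (ht : t ∈ Ici 0) :
    HasDerivWithinAt (fun s => (‖h' s‖ / (h s).im) ^ k)
      (-2 * a * k * (‖h' t‖ / (h t).im) ^ k * (h t).im ^ 2 /
        (((h t).re - U t) ^ 2 + (h t).im ^ 2) ^ 2) (Ici 0) t := by
  have hΨ := (pow_ne_zero_iff two_ne_zero).mp (hL.sq_norm_deriv_div_im_pos ha h0 h'0 ht).ne'
  refine ((hL.hasDerivWithinAt_norm_deriv_div_im ha h0 h'0 ht).rpow_const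
    (Or.inl hΨ)).congr_deriv ?_
  rw [Real.rpow_sub_one hΨ]
  generalize ‖h' t‖ / (h t).im = Ψ at hΨ ⊢
  field_simp

theorem antitoneOn_norm_deriv_div_im (hL : IsReverseLoewnerFlow a U h h') (ha : 0 ≤ a)
    (h0 : 0 < (h 0).im) (h'0 : h' 0 ≠ 0) :
    AntitoneOn (fun s => ‖h' s‖ / (h s).im) (Ici 0) :=
  antitoneOn_Ici_of_hasDerivWithinAt_nonpos
    (fun _ hs => hL.hasDerivWithinAt_norm_deriv_div_im ha h0 h'0 hs) fun s hs => by
      have hY := hL.im_pos ha h0 (Ioi_subset_Ici_self hs)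
      refine mul_nonpos_of_nonpos_of_nonneg (div_nonpos_of_nonpos_of_nonneg ?_ (by positivity))
        (by positivity)
      nlinarith [sq_nonneg (h s).im]

theorem norm_deriv_le_mul_im_div_im (hL : IsReverseLoewnerFlow a U h h') (ha : 0 ≤ a)
    (h0 : 0 < (h 0).im) (h'0 : h' 0 ≠ 0) (ht : t ∈ Ici 0) :
    ‖h' t‖ ≤ ‖h' 0‖ * ((h t).im / (h 0).im) := by
  have hΨ := hL.antitoneOn_norm_deriv_div_im ha h0 h'0 self_mem_Ici ht ht
  rw [div_le_div_iff₀ (hL.im_pos ha h0 ht) h0] at hΨ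
  rw [mul_div_assoc', le_div_iff₀ h0]
  linarith

theorem im_div_im_le_sqrt (hL : IsReverseLoewnerFlow a U h h') (ha : 0 ≤ a)
    (h0 : 0 < (h 0).im) (ht : t ∈ Ici 0) :
    (h t).im / (h 0).im ≤ √(2 * a * t / (h 0).im ^ 2 + 1) := by
  refine Real.le_sqrt_of_sq_le ?_
  rw [div_pow, div_le_iff₀ (by positivity), add_mul, div_mul_cancel₀ _ (by positivity), one_mul]
  linarith [hL.im_sq_sub_le ha ht]

end IsReverseLoewnerFlow

theorem stmt2_general (a : ℝ) (ha : 0 < a) (U : ℝ → ℝ)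
    (z : ℂ) (hz : 0 < z.im) (h h' : ℝ → ℂ)
    (h0 : h 0 = z) (h'0 : h' 0 = 1)
    (hode : ∀ t ∈ Ici (0:ℝ), HasDerivWithinAt h (a / ((U t : ℂ) - h t)) (Ici 0) t)
    (hode' : ∀ t ∈ Ici (0:ℝ),
      HasDerivWithinAt h' (a * h' t / (h t - (U t : ℂ)) ^ 2) (Ici 0) t) :
    (∀ k : ℝ, ∀ t ∈ Ici (0:ℝ),
      HasDerivWithinAt (fun s => (‖h' s‖ / (h s).im) ^ k)
        (-2 * a * k * (‖h' t‖ / (h t).im) ^ k * (h t).im ^ 2 /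
          (((h t).re - U t) ^ 2 + (h t).im ^ 2) ^ 2) (Ici 0) t) ∧
    AntitoneOn (fun s => ‖h' s‖ / (h s).im) (Ici 0) ∧
    (∀ t ∈ Ici (0:ℝ),
      ‖h' t‖ ≤ (h t).im / z.im ∧
      (h t).im / z.im ≤ Real.sqrt (2 * a * t / z.im ^ 2 + 1)) := by
  subst h0
  have hL : IsReverseLoewnerFlow a U h h' := ⟨hode, hode'⟩
  have h'0_ne : h' 0 ≠ 0 := by simp [h'0]
  refine ⟨fun k t ht => hL.hasDerivWithinAt_rpow_norm_deriv_div_im ha.le hz h'0_ne k ht,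
    hL.antitoneOn_norm_deriv_div_im ha.le hz h'0_ne,
    fun t ht => ⟨?_, hL.im_div_im_le_sqrt ha.le hz ht⟩⟩
  simpa [h'0] using hL.norm_deriv_le_mul_im_div_im ha.le hz h'0_ne ht

/-- Reverse Loewner flow: with `Ψ_t = |h_t'(z)|/Y_t`, one has
`∂_t(Ψ_t^k) = −2ak Ψ_t^k Y_t²/(X_t²+Y_t²)²`, `Ψ` is nonincreasing, and
`|h_t'(z)| ≤ Y_t/Im z ≤ sqrt(2at/Im(z)² + 1)`. -/
theorem stmt2 (a : ℝ) (ha : 0 < a) (U : ℝ → ℝ) (hU : Continuous U)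
    (z : ℂ) (hz : 0 < z.im) (h h' : ℝ → ℂ)
    (h0 : h 0 = z) (h'0 : h' 0 = 1)
    (hode : ∀ t ∈ Ici (0:ℝ), HasDerivWithinAt h (a / ((U t : ℂ) - h t)) (Ici 0) t)
    (hode' : ∀ t ∈ Ici (0:ℝ),
      HasDerivWithinAt h' (a * h' t / (h t - (U t : ℂ)) ^ 2) (Ici 0) t) :
    (∀ k : ℝ, ∀ t ∈ Ici (0:ℝ),
      HasDerivWithinAt (fun s => (‖h' s‖ / (h s).im) ^ k)
        (-2 * a * k * (‖h' t‖ / (h t).im) ^ k * (h t).im ^ 2 /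
          (((h t).re - U t) ^ 2 + (h t).im ^ 2) ^ 2) (Ici 0) t) ∧
    AntitoneOn (fun s => ‖h' s‖ / (h s).im) (Ici 0) ∧
    (∀ t ∈ Ici (0:ℝ),
      ‖h' t‖ ≤ (h t).im / z.im ∧
      (h t).im / z.im ≤ Real.sqrt (2 * a * t / z.im ^ 2 + 1)) :=
  stmt2_general a ha U z hz h h' h0 h'0 hode hode'
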